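/- For every n ≥ 1, ρ̂_n(𝒜_Ω) = ρ̂_n^{(per)}(𝒜, Ω): the supremum of ρ(A^{(i_n)} ⋯ A^{(i_1)})^{1/n} over all products of n matrices from the Ω-lift 𝒜_Ω equals the supremum of ρ(A_{i_n} ⋯ A_{i_1})^{1/n} over all Ω-admissible periodically extendable sequences (i_1,…,i_n), where ρ denotes the spectral radius. -/

import Mathlib

open Matrix Filter
open scoped Kronecker

/-- `seqProd A n = A (n-1) * ⋯ * A 1 * A 0`. -/
def seqProd {α : Type*} [Monoid α] (A : ℕ → α) (n : ℕ) : α :=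
  ((List.range n).reverse.map A).prod

/-- The matrix `Ω_i = ω_i^T δ_i`: outer product of the `i`-th column of `ω`
with the `i`-th standard basis row vector. -/
def OmegaM {N : ℕ} (ω : Matrix (Fin N) (Fin N) ℂ) (i : Fin N) :
    Matrix (Fin N) (Fin N) ℂ :=
  vecMulVec (fun j => ω j i) (fun k => if k = i then 1 else 0)

/-- Ω-admissibility of the finite sequence `i 0, …, i (n-1)`. -/
def Adm {N : ℕ} (ω : Matrix (Fin N) (Fin N) ℂ) (i : ℕ → Fin N) (n : ℕ) : Prop :=
  (∀ k, k + 1 < n → ω (i (k + 1)) (i k) = 1) ∧ ∃ j, ω j (i (n - 1)) = 1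

/-- Ω-admissible and periodically extendable. -/
def PerAdm {N : ℕ} (ω : Matrix (Fin N) (Fin N) ℂ) (i : ℕ → Fin N) (n : ℕ) : Prop :=
  Adm ω i n ∧ ω (i 0) (i (n - 1)) = 1

/-- Only the consecutive-transition condition (the set `W⁰`). -/
def AdmZero {N : ℕ} (ω : Matrix (Fin N) (Fin N) ℂ) (i : ℕ → Fin N) (n : ℕ) : Prop :=
  ∀ k, k + 1 < n → ω (i (k + 1)) (i k) = 1

/-- Extendability to an infinite admissible sequence (the set `W^∞`). -/
def AdmInf {N : ℕ} (ω : Matrix (Fin N) (Fin N) ℂ) (i : ℕ → Fin N) (n : ℕ) : Prop :=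
  ∃ j : ℕ → Fin N, (∀ k, k < n → j k = i k) ∧ ∀ k, ω (j (k + 1)) (j k) = 1

/-- The norm `|||M||| = max_i Σ_j ‖m_{ij}‖` on `N × N` block matrices with `d × d` blocks. -/
noncomputable def blockNorm {N d : ℕ} (nrm : Matrix (Fin d) (Fin d) ℂ → ℝ)
    (M : Matrix (Fin N × Fin d) (Fin N × Fin d) ℂ) : ℝ :=
  ⨆ i : Fin N, ∑ j : Fin N, nrm (Matrix.of fun a b => M (i, a) (j, b))

/-- The lifted matrix `A^{(i)} = Ω_i ⊗ A_i`. -/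
def liftA {N d : ℕ} (ω : Matrix (Fin N) (Fin N) ℂ)
    (A : Fin N → Matrix (Fin d) (Fin d) ℂ) (i : Fin N) :
    Matrix (Fin N × Fin d) (Fin N × Fin d) ℂ :=
  OmegaM ω i ⊗ₖ A i

/-- Spectral radius of a complex matrix, as a real number. -/
noncomputable def sprad {m : Type*} [Fintype m] [DecidableEq m] (M : Matrix m m ℂ) : ℝ :=
  (spectralRadius ℂ M).toReal

/-- `ρ_n(𝒜, Ω)`. -/
noncomputable def rhoMark {N d : ℕ} (nrm : Matrix (Fin d) (Fin d) ℂ → ℝ)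
    (ω : Matrix (Fin N) (Fin N) ℂ) (A : Fin N → Matrix (Fin d) (Fin d) ℂ) (n : ℕ) : ℝ :=
  sSup {x : ℝ | ∃ i : ℕ → Fin N, Adm ω i n ∧
    x = nrm (seqProd (fun k => A (i k)) n) ^ ((1 : ℝ) / n)}

/-- `ρ^{(per)}_n(𝒜, Ω)`. -/
noncomputable def rhoPerMark {N d : ℕ} (nrm : Matrix (Fin d) (Fin d) ℂ → ℝ)
    (ω : Matrix (Fin N) (Fin N) ℂ) (A : Fin N → Matrix (Fin d) (Fin d) ℂ) (n : ℕ) : ℝ :=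
  sSup {x : ℝ | ∃ i : ℕ → Fin N, PerAdm ω i n ∧
    x = nrm (seqProd (fun k => A (i k)) n) ^ ((1 : ℝ) / n)}

/-- `ρ^{(0)}_n(𝒜, Ω)`. -/
noncomputable def rhoZeroMark {N d : ℕ} (nrm : Matrix (Fin d) (Fin d) ℂ → ℝ)
    (ω : Matrix (Fin N) (Fin N) ℂ) (A : Fin N → Matrix (Fin d) (Fin d) ℂ) (n : ℕ) : ℝ :=
  sSup {x : ℝ | ∃ i : ℕ → Fin N, AdmZero ω i n ∧
    x = nrm (seqProd (fun k => A (i k)) n) ^ ((1 : ℝ) / n)}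

/-- `ρ^{(∞)}_n(𝒜, Ω)`. -/
noncomputable def rhoInfMark {N d : ℕ} (nrm : Matrix (Fin d) (Fin d) ℂ → ℝ)
    (ω : Matrix (Fin N) (Fin N) ℂ) (A : Fin N → Matrix (Fin d) (Fin d) ℂ) (n : ℕ) : ℝ :=
  sSup {x : ℝ | ∃ i : ℕ → Fin N, AdmInf ω i n ∧
    x = nrm (seqProd (fun k => A (i k)) n) ^ ((1 : ℝ) / n)}

/-- `ρ̂_n(𝒜, Ω)`. -/
noncomputable def rhoHatMark {N d : ℕ} (ω : Matrix (Fin N) (Fin N) ℂ)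
    (A : Fin N → Matrix (Fin d) (Fin d) ℂ) (n : ℕ) : ℝ :=
  sSup {x : ℝ | ∃ i : ℕ → Fin N, Adm ω i n ∧
    x = sprad (seqProd (fun k => A (i k)) n) ^ ((1 : ℝ) / n)}

/-- `ρ̂^{(per)}_n(𝒜, Ω)`. -/
noncomputable def rhoHatPerMark {N d : ℕ} (ω : Matrix (Fin N) (Fin N) ℂ)
    (A : Fin N → Matrix (Fin d) (Fin d) ℂ) (n : ℕ) : ℝ :=
  sSup {x : ℝ | ∃ i : ℕ → Fin N, PerAdm ω i n ∧
    x = sprad (seqProd (fun k => A (i k)) n) ^ ((1 : ℝ) / n)}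

/-!
The lifted product `Ω_{i_n} ⋯ Ω_{i_1} ⊗ A_{i_n} ⋯ A_{i_1}` equals `(c • u vᵀ) ⊗ B`, where `B` is the
plain product, `u` the `i_n`-th column of `ω`, `v = δ_{i_1}` and `c` the product of the transition
entries `ω_{i_{j+1} i_j}`. Writing `u vᵀ ⊗ B = X Y` with `Y X = (vᵀ u) B`, and using that `X Y` and
`Y X` have the same nonzero spectrum, its spectral radius is that of `(ω_{i_1 i_n} c) • B`. For a
`{0,1}`-matrix `ω` this scalar is `1` on periodically extendable admissible sequences and `0`
otherwise, so the lifted family only adds zeros to the values of `ρ̂^{(per)}_n`, which does not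
change a supremum of nonnegative reals.
-/

open Finset

theorem spectralRadius_eq_iSup_spectrum_sdiff_zero {𝕜 A : Type*} [NormedField 𝕜] [Ring A]
    [Algebra 𝕜 A] (a : A) :
    spectralRadius 𝕜 a = ⨆ k ∈ spectrum 𝕜 a \ {0}, (‖k‖₊ : ENNReal) := by
  refine le_antisymm (iSup₂_le fun k hk => ?_) (biSup_mono fun k hk => hk.1)
  rcases eq_or_ne k 0 with rfl | hk0
  · simp
  · exact le_iSup₂ (f := fun k (_ : k ∈ spectrum 𝕜 a \ {0}) => (‖k‖₊ : ENNReal)) k ⟨hk, hk0⟩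

namespace Matrix

variable {m n : Type*} [Fintype m] [Fintype n] [DecidableEq m] [DecidableEq n]

theorem spectrum_mul_comm_sdiff_zero {K : Type*} [Field K] (X : Matrix m n K)
    (Y : Matrix n m K) : spectrum K (X * Y) \ {0} = spectrum K (Y * X) \ {0} := by
  ext k
  simp only [Set.mem_sdiff, Set.mem_singleton_iff, mem_spectrum_iff_isRoot_charpoly,
    Polynomial.IsRoot.def]
  refine and_congr_left fun hk0 => ?_
  have h := congrArg (Polynomial.eval k) (charpoly_mul_comm' X Y)
  simp only [Polynomial.eval_mul, Polynomial.eval_pow, Polynomial.eval_X] at h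
  rw [← mul_eq_zero_iff_left (pow_ne_zero (Fintype.card n) hk0), h,
    mul_eq_zero_iff_left (pow_ne_zero _ hk0)]

variable {𝕜 : Type*} [NormedField 𝕜]

theorem spectralRadius_mul_comm (X : Matrix m n 𝕜) (Y : Matrix n m 𝕜) :
    spectralRadius 𝕜 (X * Y) = spectralRadius 𝕜 (Y * X) := by
  rw [spectralRadius_eq_iSup_spectrum_sdiff_zero, spectralRadius_eq_iSup_spectrum_sdiff_zero,
    spectrum_mul_comm_sdiff_zero]

theorem spectralRadius_vecMulVec_kronecker (u v : n → 𝕜) (B : Matrix m m 𝕜) :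
    spectralRadius 𝕜 (vecMulVec u v ⊗ₖ B) = spectralRadius 𝕜 ((v ⬝ᵥ u) • B) := by
  let X : Matrix (n × m) m 𝕜 := of fun p b => u p.1 * (1 : Matrix m m 𝕜) p.2 b
  let Y : Matrix m (n × m) 𝕜 := of fun a p => v p.1 * B a p.2
  have hXY : X * Y = vecMulVec u v ⊗ₖ B := by
    ext ⟨j, a⟩ ⟨k, b⟩
    simp [X, Y, mul_apply, one_apply, vecMulVec_apply, mul_assoc]
  have hYX : Y * X = (v ⬝ᵥ u) • B := by
    ext a b
    simp [X, Y, mul_apply, one_apply, Fintype.sum_prod_type, dotProduct, sum_mul,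
      mul_right_comm]
  rw [← hXY, spectralRadius_mul_comm, hYX]

end Matrix

theorem Real.sSup_eq_of_subset_of_subset_insert_zero {S T : Set ℝ} (hT : BddAbove T)
    (hT0 : ∀ x ∈ T, 0 ≤ x) (hTS : T ⊆ S) (hST : S ⊆ insert 0 T) : sSup S = sSup T := by
  have hS : BddAbove S := (hT.insert 0).mono hST
  refine le_antisymm (Real.sSup_le (fun x hx => ?_) (Real.sSup_nonneg hT0))
    (Real.sSup_le (fun x hx => le_csSup hS (hTS hx)) (Real.sSup_nonneg fun x hx => ?_))
  · rcases hST hx with rfl | hx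
    exacts [Real.sSup_nonneg hT0, le_csSup hT hx]
  · rcases hST hx with rfl | hx
    exacts [le_rfl, hT0 x hx]

section SeqProd

variable {α : Type*} [Monoid α]

theorem seqProd_succ (A : ℕ → α) (n : ℕ) : seqProd A (n + 1) = A n * seqProd A n := by
  simp [seqProd, List.range_succ]

theorem finite_range_seqProd {ι : Type*} [Finite ι] (A : ι → α) (n : ℕ) :
    (Set.range fun i : ℕ → ι => seqProd (fun k => A (i k)) n).Finite := by
  induction n with
  | zero => exact (Set.finite_singleton 1).subset (by rintro _ ⟨i, rfl⟩; rfl)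
  | succ n ih =>
    refine ((Set.finite_range A).image2 (· * ·) ih).subset ?_
    rintro _ ⟨i, rfl⟩
    exact ⟨_, ⟨i n, rfl⟩, _, ⟨i, rfl⟩, (seqProd_succ (fun k => A (i k)) n).symm⟩

end SeqProd

theorem seqProd_kronecker {R m n : Type*} [CommSemiring R] [Fintype m] [Fintype n]
    [DecidableEq m] [DecidableEq n] (P : ℕ → Matrix m m R) (B : ℕ → Matrix n n R) (k : ℕ) :
    seqProd (fun j => P j ⊗ₖ B j) k = seqProd P k ⊗ₖ seqProd B k := by
  induction k with
  | zero => exact one_kronecker_one.symm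
  | succ k ih => rw [seqProd_succ, seqProd_succ, seqProd_succ, ih, mul_kronecker_mul]

section Lift

variable {N d : ℕ} (ω : Matrix (Fin N) (Fin N) ℂ)

theorem seqProd_omegaM (i : ℕ → Fin N) (m : ℕ) :
    seqProd (fun k => OmegaM ω (i k)) (m + 1) =
      (∏ k ∈ range m, ω (i (k + 1)) (i k)) •
        vecMulVec (fun j => ω j (i m)) (fun k => if k = i 0 then 1 else 0) := by
  induction m with
  | zero => simp [seqProd, OmegaM]
  | succ m ih =>
    rw [seqProd_succ, ih, mul_smul_comm, OmegaM, vecMulVec_mul_vecMulVec, prod_range_succ]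
    simp [dotProduct, smul_smul, mul_comm]

theorem perAdm_succ_iff (i : ℕ → Fin N) (m : ℕ) :
    PerAdm ω i (m + 1) ↔ ω (i 0) (i m) = 1 ∧ ∀ k ∈ range m, ω (i (k + 1)) (i k) = 1 := by
  simp only [PerAdm, Adm, add_tsub_cancel_right, Nat.add_lt_add_iff_right, mem_range]
  exact ⟨fun h => ⟨h.2, h.1.1⟩, fun h => ⟨⟨h.2, i 0, h.1⟩, h.1⟩⟩

theorem spectralRadius_seqProd_liftA (A : Fin N → Matrix (Fin d) (Fin d) ℂ) (i : ℕ → Fin N)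
    (m : ℕ) :
    spectralRadius ℂ (seqProd (fun k => liftA ω A (i k)) (m + 1)) =
      spectralRadius ℂ ((ω (i 0) (i m) * ∏ k ∈ range m, ω (i (k + 1)) (i k)) •
        seqProd (fun k => A (i k)) (m + 1)) := by
  simp only [liftA]
  rw [seqProd_kronecker, seqProd_omegaM, smul_kronecker, ← kronecker_smul,
    spectralRadius_vecMulVec_kronecker, smul_smul]
  simp [dotProduct]

variable {ω}

open scoped Classical in
theorem cycleWeight_eq_ite (hω : ∀ a b, ω a b = 0 ∨ ω a b = 1) (i : ℕ → Fin N) (m : ℕ) :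
    ω (i 0) (i m) * ∏ k ∈ range m, ω (i (k + 1)) (i k) =
      if PerAdm ω i (m + 1) then 1 else 0 := by
  have hω' : ∀ a b, ω a b = if ω a b = 1 then 1 else 0 := fun a b => by
    rcases hω a b with h | h <;> simp [h]
  rw [hω' (i 0), prod_congr rfl fun k _ => hω' (i (k + 1)) (i k), prod_boole,
    ite_zero_mul_ite_zero, mul_one, if_congr (perAdm_succ_iff ω i m) rfl rfl]

open scoped Classical in
theorem sprad_seqProd_liftA (hω : ∀ a b, ω a b = 0 ∨ ω a b = 1)
    (A : Fin N → Matrix (Fin d) (Fin d) ℂ) (i : ℕ → Fin N) (m : ℕ) :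
    sprad (seqProd (fun k => liftA ω A (i k)) (m + 1)) =
      if PerAdm ω i (m + 1) then sprad (seqProd (fun k => A (i k)) (m + 1)) else 0 := by
  rw [sprad, spectralRadius_seqProd_liftA, cycleWeight_eq_ite hω]
  split_ifs
  · rw [one_smul, sprad]
  · rw [zero_smul, spectrum.spectralRadius_zero, ENNReal.toReal_zero]

end Lift

theorem stmt7_general {N d : ℕ} (ω : Matrix (Fin N) (Fin N) ℂ)
    (hω : ∀ a b, ω a b = 0 ∨ ω a b = 1)
    (A : Fin N → Matrix (Fin d) (Fin d) ℂ) (n : ℕ) (hn : 1 ≤ n) :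
    sSup {x : ℝ | ∃ i : ℕ → Fin N,
        x = sprad (seqProd (fun k => liftA ω A (i k)) n) ^ ((1 : ℝ) / n)} =
      rhoHatPerMark ω A n := by
  obtain ⟨m, rfl⟩ := Nat.exists_eq_add_of_le' hn
  classical
  have hlift : ∀ i, sprad (seqProd (fun k => liftA ω A (i k)) (m + 1)) ^ ((1 : ℝ) / ↑(m + 1)) =
      if PerAdm ω i (m + 1) then
        sprad (seqProd (fun k => A (i k)) (m + 1)) ^ ((1 : ℝ) / ↑(m + 1)) else 0 := by
    intro i
    rw [sprad_seqProd_liftA hω]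
    split_ifs
    exacts [rfl, Real.zero_rpow (by positivity)]
  apply Real.sSup_eq_of_subset_of_subset_insert_zero
  · refine (((finite_range_seqProd A (m + 1)).image
      fun M => sprad M ^ ((1 : ℝ) / ↑(m + 1))).subset ?_).bddAbove
    rintro _ ⟨i, -, rfl⟩
    exact ⟨_, ⟨i, rfl⟩, rfl⟩
  · rintro _ ⟨i, -, rfl⟩
    exact Real.rpow_nonneg ENNReal.toReal_nonneg _
  · rintro _ ⟨i, hi, rfl⟩
    exact ⟨i, by rw [hlift, if_pos hi]⟩
  · rintro _ ⟨i, rfl⟩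
    rw [hlift]
    split_ifs with hi
    exacts [Or.inr ⟨i, hi, rfl⟩, Or.inl rfl]

theorem stmt7 {N d : ℕ} (hN : 0 < N) (ω : Matrix (Fin N) (Fin N) ℂ)
    (hω : ∀ a b, ω a b = 0 ∨ ω a b = 1)
    (A : Fin N → Matrix (Fin d) (Fin d) ℂ) (n : ℕ) (hn : 1 ≤ n) :
    sSup {x : ℝ | ∃ i : ℕ → Fin N,
        x = sprad (seqProd (fun k => liftA ω A (i k)) n) ^ ((1 : ℝ) / n)} =
      rhoHatPerMark ω A n :=
  stmt7_general ω hω A n hn
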